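/- Every regular element of gl(n,ℝ) is conjugate under GL(n,ℝ) to an element x with D(x) ≠ 0. Hence the saturation of the open set Ω = {x : D(x) ≠ 0} under the adjoint (conjugation) action of GL(n,ℝ) is exactly the set of regular elements of gl(n,ℝ). -/

import Mathlib

noncomputable def Dmat (n : ℕ) (x : Matrix (Fin (n+1)) (Fin (n+1)) ℝ) : ℝ :=
  (Matrix.of fun k j : Fin (n+1) =>
    Matrix.vecMul (Pi.single (Fin.last n) 1) (x ^ (k : ℕ)) j).det

/-!
`Dmat n x` is the determinant of the Krylov matrix with rows `e, e x, …, e xⁿ`, where `e` is the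
last standard row vector. Conjugating `x` by `g` replaces `e` by `w = e g` and multiplies the
determinant by `det g⁻¹`; since every `w` with `w, w x, …, w xⁿ` independent is the last row of an
invertible matrix, `x` lies in the saturation of `Ω` iff `xᵀ` has a cyclic vector. By the
structure theory of finitely generated `K[X]`-modules some vector has annihilator exactly the
minimal polynomial, so a cyclic vector exists iff `deg (minpoly xᵀ) = n + 1`, i.e. iff the
minimal polynomial, which `x` shares with `xᵀ`, is the characteristic polynomial.
-/

open Polynomial Module

section Krylov

variable {R V : Type*} [CommRing R] [AddCommGroup V] [Module R V] (f : Module.End R V) (v : V)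

theorem Polynomial.aeval_endomorphism_eq_sum_degreeLTEquiv {m : ℕ} {p : R[X]}
    (hp : p ∈ degreeLT R m) :
    aeval f p v = ∑ i, degreeLTEquiv R m ⟨p, hp⟩ i • (f ^ (i : ℕ)) v := by
  rw [aeval_endomorphism]
  exact (sum_fin (fun i b => b • (f ^ i) v) (by simp) (mem_degreeLT.mp hp)).symm

theorem Polynomial.linearIndependent_fin_powers_iff_aeval {m : ℕ} :
    LinearIndependent R (fun i : Fin m => (f ^ (i : ℕ)) v) ↔
      ∀ p ∈ degreeLT R m, aeval f p v = 0 → p = 0 := by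
  rw [Fintype.linearIndependent_iff]
  constructor
  · intro h p hp hpv
    rw [← degreeLTEquiv_eq_zero_iff_eq_zero hp]
    ext i
    exact h _ (by rwa [← aeval_endomorphism_eq_sum_degreeLTEquiv f v hp]) i
  · intro h c hc
    obtain ⟨⟨p, hp⟩, rfl⟩ := (degreeLTEquiv R m).surjective c
    rw [← aeval_endomorphism_eq_sum_degreeLTEquiv f v hp] at hc
    obtain rfl := h p hp hc
    exact fun i => coeff_zero (i : ℕ)

end Krylov

namespace Module.End

variable {K V : Type*} [Field K] [AddCommGroup V] [Module K V] [FiniteDimensional K V]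
  (f : Module.End K V)

theorem exists_aeval_apply_eq_zero_iff_minpoly_dvd :
    ∃ v : V, ∀ p : K[X], aeval f p v = 0 ↔ minpoly K f ∣ p := by
  obtain ⟨v, hv⟩ := exists_ker_toSpanSingleton_eq_annihilator K[X] (AEval' f)
  obtain ⟨v, rfl⟩ := (AEval'.of f).surjective v
  refine ⟨v, fun p => ?_⟩
  rw [← Ideal.mem_span_singleton, span_minpoly_eq_annihilator, ← hv, LinearMap.mem_ker,
    LinearMap.toSpanSingleton_apply, ← AEval.of_aeval_smul]
  exact (LinearEquiv.map_eq_zero_iff _).symm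

theorem exists_linearIndependent_powers_iff_minpoly_eq_charpoly :
    (∃ v : V, LinearIndependent K (fun i : Fin (finrank K V) => (f ^ (i : ℕ)) v)) ↔
      minpoly K f = f.charpoly := by
  have hmonic := minpoly.monic (Algebra.IsIntegral.isIntegral (R := K) f)
  simp_rw [linearIndependent_fin_powers_iff_aeval, mem_degreeLT]
  constructor
  · rintro ⟨v, hv⟩
    refine (eq_of_monic_of_dvd_of_natDegree_le hmonic f.charpoly_monic
      f.minpoly_dvd_charpoly ?_).symm
    rw [f.charpoly_natDegree]
    by_contra! hlt
    refine hmonic.ne_zero (hv _ ?_ (minpoly.aeval K f ▸ rfl))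
    exact degree_le_natDegree.trans_lt (by exact_mod_cast hlt)
  · intro h
    obtain ⟨v, hv⟩ := f.exists_aeval_apply_eq_zero_iff_minpoly_dvd
    refine ⟨v, fun p hp hpv => eq_zero_of_dvd_of_degree_lt ((hv p).mp hpv) ?_⟩
    rwa [h, degree_eq_natDegree f.charpoly_monic.ne_zero, f.charpoly_natDegree]

end Module.End

namespace Matrix

section Transpose

variable {ι : Type*} [Fintype ι] [DecidableEq ι]

theorem aeval_transpose {R : Type*} [CommSemiring R] (M : Matrix ι ι R) (p : R[X]) :
    aeval Mᵀ p = (aeval M p)ᵀ := by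
  have h := aeval_algHom_apply (transposeAlgEquiv ι R R).toAlgHom M p
  simp only [AlgEquiv.coe_toAlgHom, transposeAlgEquiv_apply, aeval_op_apply] at h
  exact MulOpposite.op_injective h

theorem minpoly_transpose {K : Type*} [Field K] (M : Matrix ι ι K) :
    minpoly K Mᵀ = minpoly K M := by
  have hM := Algebra.IsIntegral.isIntegral (R := K) M
  have hMt := Algebra.IsIntegral.isIntegral (R := K) Mᵀ
  refine eq_of_monic_of_associated (minpoly.monic hMt) (minpoly.monic hM)
    (associated_of_dvd_dvd (minpoly.dvd _ _ ?_) (minpoly.dvd _ _ ?_))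
  · rw [aeval_transpose, minpoly.aeval, transpose_zero]
  · exact transpose_injective (by rw [← aeval_transpose, minpoly.aeval, transpose_zero])

end Transpose

def krylov {R : Type*} [Semiring R] {m : ℕ} (x : Matrix (Fin m) (Fin m) R) (w : Fin m → R) :
    Matrix (Fin m) (Fin m) R :=
  of fun k => w ᵥ* x ^ (k : ℕ)

theorem krylov_conj {R : Type*} [Semiring R] {m : ℕ} (x : Matrix (Fin m) (Fin m) R)
    (w : Fin m → R) (g : (Matrix (Fin m) (Fin m) R)ˣ) :
    krylov ((g : Matrix (Fin m) (Fin m) R) * x * (↑g⁻¹ : Matrix (Fin m) (Fin m) R)) w =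
      krylov x (w ᵥ* ↑g) * (↑g⁻¹ : Matrix (Fin m) (Fin m) R) := by
  ext1 k
  simp only [krylov, Units.conj_pow, ← vecMul_vecMul]
  exact fun _ => rfl

variable {K : Type*} [Field K]

theorem det_krylov_ne_zero_iff {m : ℕ} (x : Matrix (Fin m) (Fin m) K) (w : Fin m → K) :
    (krylov x w).det ≠ 0 ↔ LinearIndependent K (fun k : Fin m => (toLin' xᵀ ^ (k : ℕ)) w) := by
  rw [← isUnit_iff_ne_zero, ← isUnit_iff_isUnit_det, ← linearIndependent_rows_iff_isUnit]
  congr! with k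
  rw [← toLin'_pow, toLin'_apply, ← transpose_pow, mulVec_transpose]
  rfl

theorem exists_det_krylov_ne_zero_iff_minpoly_eq_charpoly {m : ℕ}
    (x : Matrix (Fin m) (Fin m) K) :
    (∃ w, (krylov x w).det ≠ 0) ↔ minpoly K x = x.charpoly := by
  simp_rw [det_krylov_ne_zero_iff]
  rw [← minpoly_transpose, ← charpoly_transpose, ← minpoly_toLin', ← charpoly_toLin',
    ← Module.End.exists_linearIndependent_powers_iff_minpoly_eq_charpoly, finrank_fin_fun]

/-- Reversing the rows of `krylov x w` puts `w = w ᵥ* x ^ 0` in the last row. -/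
theorem exists_vecMul_eq_of_det_krylov_ne_zero {n : ℕ}
    {x : Matrix (Fin (n + 1)) (Fin (n + 1)) K} {w : Fin (n + 1) → K}
    (hw : (krylov x w).det ≠ 0) :
    ∃ g : GL (Fin (n + 1)) K, Pi.single (Fin.last n) 1 ᵥ* ↑g = w := by
  refine ⟨.mkOfDetNeZero ((krylov x w).submatrix Fin.revPerm id) ?_, ?_⟩
  · rw [det_permute]
    exact mul_ne_zero ((Equiv.Perm.sign _).isUnit.map (Int.castRingHom K)).ne_zero hw
  · ext j
    simp [krylov]

theorem exists_det_krylov_conj_ne_zero_iff {n : ℕ} (x : Matrix (Fin (n + 1)) (Fin (n + 1)) K) :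
    (∃ g : GL (Fin (n + 1)) K,
      (krylov ((g : Matrix (Fin (n + 1)) (Fin (n + 1)) K) * x *
        (↑g⁻¹ : Matrix (Fin (n + 1)) (Fin (n + 1)) K)) (Pi.single (Fin.last n) 1)).det ≠ 0) ↔
      ∃ w, (krylov x w).det ≠ 0 := by
  simp_rw [krylov_conj, det_mul]
  constructor
  · rintro ⟨g, hg⟩
    exact ⟨_, left_ne_zero_of_mul hg⟩
  · rintro ⟨w, hw⟩
    obtain ⟨g, rfl⟩ := exists_vecMul_eq_of_det_krylov_ne_zero hw
    exact ⟨g, mul_ne_zero hw ((isUnit_iff_isUnit_det _).mp (g⁻¹).isUnit).ne_zero⟩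

end Matrix

theorem saturation_of_Omega_eq_regular (n : ℕ) (x : Matrix (Fin (n+1)) (Fin (n+1)) ℝ) :
    (∃ g : GL (Fin (n+1)) ℝ,
      Dmat n ((g : Matrix (Fin (n+1)) (Fin (n+1)) ℝ) * x *
        ((g⁻¹ : GL (Fin (n+1)) ℝ) : Matrix (Fin (n+1)) (Fin (n+1)) ℝ)) ≠ 0) ↔
    minpoly ℝ x = Matrix.charpoly x :=
  (Matrix.exists_det_krylov_conj_ne_zero_iff x).trans
    (Matrix.exists_det_krylov_ne_zero_iff_minpoly_eq_charpoly x)
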